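/- Let N ≥ 1, τ>0, and let f : [0,∞) → [0,∞) be a C² function with f(0)=0, f(1)=1, f'(0)>1, f'(1)<1, f'(u)>0 for all u∈(0,1), and f(u)>u for all u∈(0,1). Let Ω₀ ⊂ ℝ^N be a nonempty bounded convex open set, let v₀ : ℝ^N → [0,1) be bounded and uniformly continuous with supp v₀ = closure(Ω₀), and let φ : [−τ,0]×ℝ^N → [0,1] be uniformly continuous with φ(θ,x) ≤ v₀(x) for all (θ,x). Let U* : ℝ → [0,1] be a nonincreasing C² monostable travelling wave of minimal speed c*>0: (U*)'' + c*(U*)' + f(U*(·+c*τ)) − U* = 0 on ℝ, U*(−∞)=1, U*(+∞)=0, and let h∈ℝ be such that sup v₀ ≤ U*(c*τ + h). Then for every ε>0, every solution u^ε of the scaled delayed reaction–diffusion equation with initial datum φ satisfies: for every x₀ ∈ ∂Ω₀ and every unit vector n ∈ ℝ^N with (y − x₀)·n ≤ 0 for all y ∈ Ω₀ (a supporting hyperplane normal at x₀), u^ε(t,x) ≤ U*(((x−x₀)·n − c*t)/ε + h) for all t ∈ [−ετ,∞) and all x∈ℝ^N. -/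

import Mathlib

open Set Filter Metric
open scoped Topology BigOperators RealInnerProductSpace

/-- The Laplacian of a function on `ℝ^N`, as a sum of pure second derivatives. -/
noncomputable def lap {N : ℕ} (g : EuclideanSpace ℝ (Fin N) → ℝ)
    (x : EuclideanSpace ℝ (Fin N)) : ℝ :=
  ∑ i : Fin N, iteratedFDeriv ℝ 2 g x ![EuclideanSpace.single i 1, EuclideanSpace.single i 1]
/-- `f : [0,∞) → [0,∞)` is a monostable nonlinearity of class `C²`:
`f(0)=0`, `f(1)=1`, `f'(0)>1`, `f'(1)<1`, `f'>0` on `(0,1)` and `f(u)>u` on `(0,1)`. -/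
structure Monostable (f : ℝ → ℝ) : Prop where
  smooth : ContDiffOn ℝ 2 f (Ici 0)
  nonneg : ∀ u, 0 ≤ u → 0 ≤ f u
  map0 : f 0 = 0
  map1 : f 1 = 1
  slope0 : 1 < derivWithin f (Ici 0) 0
  slope1 : derivWithin f (Ici 0) 1 < 1
  derivPos : ∀ u ∈ Ioo (0:ℝ) 1, 0 < derivWithin f (Ici 0) u
  aboveId : ∀ u ∈ Ioo (0:ℝ) 1, u < f u
/-- A monostable delayed travelling wave of speed `c` for the nonlinearity `f`:
a `C²` profile with values in `[0,1]`, `U'' + cU' + f(U(·+cτ)) − U = 0`,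
`U(−∞)=1`, `U(+∞)=0`. -/
def MonoWave (f : ℝ → ℝ) (τ : ℝ) (U : ℝ → ℝ) (c : ℝ) : Prop :=
  ContDiff ℝ 2 U ∧ (∀ z, U z ∈ Icc (0:ℝ) 1) ∧
    (∀ z, deriv (deriv U) z + c * deriv U z + f (U (z + c * τ)) - U z = 0) ∧
    Tendsto U atBot (𝓝 1) ∧ Tendsto U atTop (𝓝 0)
/-- `u` is a solution of the scaled delayed reaction–diffusion equation
`∂_t u = εΔu + (1/ε)[f(u(t−ετ,x)) − u(t,x)]` on `(0,∞)×ℝ^N`, with values in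
`[0,1]`, continuous on `[−ετ,∞)×ℝ^N`, equal to `φ(·/ε,·)` on `[−ετ,0]×ℝ^N`,
`C¹` in `t` and `C²` in `x` for `t > 0`. -/
def IsRDSol {N : ℕ} (f : ℝ → ℝ) (τ ε : ℝ)
    (φ u : ℝ → EuclideanSpace ℝ (Fin N) → ℝ) : Prop :=
  ContinuousOn (fun p : ℝ × EuclideanSpace ℝ (Fin N) => u p.1 p.2)
      (Ici (-(ε * τ)) ×ˢ univ) ∧
    (∀ t ≥ -(ε * τ), ∀ x, u t x ∈ Icc (0:ℝ) 1) ∧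
    (∀ θ ∈ Icc (-(ε * τ)) 0, ∀ x, u θ x = φ (θ / ε) x) ∧
    (∀ t > (0:ℝ), (∀ x, DifferentiableAt ℝ (fun s => u s x) t) ∧ ContDiff ℝ 2 (u t)) ∧
    (∀ t > (0:ℝ), ∀ x, deriv (fun s => u s x) t
      = ε * lap (u t) x + (1 / ε) * (f (u (t - ε * τ) x) - u t x))

/-!
The planar wave `W t x = U*(((x - x₀)·n - c*t)/ε + h)` is an exact solution of the scaled delayed
equation, and it dominates `u^ε` on the initial layer `[-ετ, 0]`: on `closure Ω₀` we have
`(x - x₀)·n ≤ 0`, so monotonicity of `U*` gives `W ≥ U*(c*τ + h) ≥ sup v₀`, and off `closure Ω₀`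
the datum vanishes. The comparison is propagated by the method of steps. On `[kετ, (k+1)ετ]` the
delayed arguments lie in earlier layers, where `u ≤ W` and `f` is nondecreasing on `[0,1]`, so
`u - W` satisfies `∂ₜd ≤ εΔd` wherever `d > 0`. A weak maximum principle on `ℝ^N`, obtained by
subtracting `δ(1 + K t + ‖x - x*‖²)` to force an interior maximum, then gives `u ≤ W` on the layer.
-/

lemma IsLocalMax.deriv_deriv_nonpos {κ : ℝ → ℝ} {a : ℝ} (h : IsLocalMax κ a)
    (hc : ContinuousAt κ a) : deriv (deriv κ) a ≤ 0 := by
  by_contra! hpos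
  -- by the second-derivative test `a` would also be a local minimum, making `κ` locally constant
  have hconst : κ =ᶠ[𝓝 a] fun _ => κ a :=
    ((isLocalMin_of_deriv_deriv_pos hpos h.deriv_eq_zero hc).and h).mono
      fun s hs => le_antisymm hs.2 hs.1
  rw [hconst.deriv.deriv_eq] at hpos
  simp at hpos

lemma deriv_nonneg_of_isMaxOn_Icc_right {κ : ℝ → ℝ} {a b κ' : ℝ} (hab : a < b)
    (hκ : HasDerivAt κ κ' b) (hmax : IsMaxOn κ (Icc a b) b) : 0 ≤ κ' := by
  have hdir : a - b ∈ posTangentConeAt (Icc a b) b :=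
    sub_mem_posTangentConeAt_of_segment_subset
      ((convex_Icc a b).segment_subset (right_mem_Icc.2 hab.le) (left_mem_Icc.2 hab.le))
  have := hmax.localize.hasFDerivWithinAt_nonpos hκ.hasDerivWithinAt.hasFDerivWithinAt hdir
  rw [ContinuousLinearMap.toSpanSingleton_apply, smul_eq_mul] at this
  nlinarith

lemma IsCompact.exists_isMaxOn_of_lt_off {X α : Type*} [TopologicalSpace X] [LinearOrder α]
    [TopologicalSpace α] [OrderClosedTopology α] {s K : Set X} {g : X → α} (hK : IsCompact K)
    (hg : ContinuousOn g K) {p : X} (hp : p ∈ K) (hout : ∀ y ∈ s \ K, g y < g p) :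
    ∃ q ∈ K, IsMaxOn g s q := by
  obtain ⟨q, hq, hmax⟩ := hK.exists_isMaxOn ⟨p, hp⟩ hg
  refine ⟨q, hq, fun y hy => ?_⟩
  by_cases hyK : y ∈ K
  · exact hmax hyK
  · exact (hout y ⟨hy, hyK⟩).le.trans (hmax hp)

lemma forall_ge_of_forall_Icc_step {L : ℝ} (hL : 0 < L) {P : ℝ → Prop}
    (h0 : ∀ t ∈ Icc (-L) 0, P t)
    (hstep : ∀ T ≥ 0, (∀ t ∈ Icc (-L) T, P t) → ∀ t ∈ Icc T (T + L), P t) :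
    ∀ t ≥ -L, P t := by
  have hk : ∀ k : ℕ, ∀ t ∈ Icc (-L) (k * L), P t := by
    intro k
    induction k with
    | zero => simpa using h0
    | succ k ih =>
      intro t ht
      rcases le_or_gt t (k * L) with hle | hgt
      · exact ih t ⟨ht.1, hle⟩
      · exact hstep (k * L) (by positivity) ih t ⟨hgt.le, by push_cast at ht; linarith [ht.2]⟩
  intro t ht
  obtain ⟨k, hk'⟩ := exists_nat_ge (t / L)
  exact hk k t ⟨ht, (div_le_iff₀ hL).1 hk'⟩

lemma Monostable.monotoneOn {f : ℝ → ℝ} (hf : Monostable f) : MonotoneOn f (Icc 0 1) := by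
  refine (strictMonoOn_of_deriv_pos (convex_Icc 0 1)
    (hf.smooth.continuousOn.mono Icc_subset_Ici_self) fun u hu => ?_).monotoneOn
  rw [interior_Icc] at hu
  rw [← derivWithin_of_mem_nhds (Ici_mem_nhds hu.1)]
  exact hf.derivPos u hu

section

variable {N : ℕ}

local notation "E" => EuclideanSpace ℝ (Fin N)

lemma lap_eq_sum_of_hasFDerivAt {g : E → ℝ} {x : E} {B : E →L[ℝ] E →L[ℝ] ℝ}
    (hB : HasFDerivAt (fderiv ℝ g) B x) :
    lap g x = ∑ i : Fin N, B (EuclideanSpace.single i 1) (EuclideanSpace.single i 1) := by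
  simp only [lap, iteratedFDeriv_two_apply, Matrix.cons_val_zero, Matrix.cons_val_one,
    hB.fderiv]

lemma lap_sub {a b : E → ℝ} {x : E} (ha : ContDiffAt ℝ 2 a x) (hb : ContDiffAt ℝ 2 b x) :
    lap (fun y => a y - b y) x = lap a x - lap b x := by
  simp only [lap, ← Finset.sum_sub_distrib]
  refine Finset.sum_congr rfl fun i _ => ?_
  rw [show (fun y => a y - b y) = a - b from rfl, iteratedFDeriv_sub_apply ha hb]
  rfl

lemma lap_comp_inner_add {ψ : ℝ → ℝ} (hψ : ContDiff ℝ 2 ψ) (m : E) (c : ℝ) (x : E) :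
    lap (fun y => ψ (⟪y, m⟫ + c)) x = deriv (deriv ψ) (⟪x, m⟫ + c) * ‖m‖ ^ 2 := by
  have hψ' : ContDiff ℝ 1 (deriv ψ) := hψ.iterate_deriv' 1 1
  have hline : ∀ y : E, HasFDerivAt (fun y : E => ⟪y, m⟫ + c) (innerSL ℝ m) y := by
    intro y
    simpa only [innerSL_apply_apply, real_inner_comm] using (innerSL ℝ m).hasFDerivAt.add_const c
  have hfd :
      fderiv ℝ (fun y => ψ (⟪y, m⟫ + c)) = fun y => deriv ψ (⟪y, m⟫ + c) • innerSL ℝ m := by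
    funext y
    exact ((hψ.differentiable two_ne_zero _).hasDerivAt.comp_hasFDerivAt y (hline y)).fderiv
  have hB : HasFDerivAt (fderiv ℝ (fun y => ψ (⟪y, m⟫ + c)))
      ((deriv (deriv ψ) (⟪x, m⟫ + c) • innerSL ℝ m).smulRight (innerSL ℝ m)) x := by
    rw [hfd]
    exact ((hψ'.differentiable one_ne_zero _).hasDerivAt.comp_hasFDerivAt x (hline x)).smul_const
      (innerSL ℝ m)
  rw [lap_eq_sum_of_hasFDerivAt hB, EuclideanSpace.norm_sq_eq, Finset.mul_sum]
  refine Finset.sum_congr rfl fun i _ => ?_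
  simp only [ContinuousLinearMap.smulRight_apply, smul_apply, coe_innerSL_apply,
    EuclideanSpace.inner_single_right, Real.ringHom_apply, one_mul, smul_eq_mul, Real.norm_eq_abs,
    sq_abs]
  ring

lemma lap_mul_norm_sub_sq_add (a : ℝ) (x₀ : E) (c : ℝ) (x : E) :
    lap (fun y => a * ‖y - x₀‖ ^ 2 + c) x = 2 * N * a := by
  have hfd :
      fderiv ℝ (fun y => a * ‖y - x₀‖ ^ 2 + c) = fun y => (2 * a) • innerSL ℝ (y - x₀) := by
    funext y
    have := ((hasFDerivAt_sub_const (x := y) x₀).norm_sq.const_mul a).add_const c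
    rw [this.fderiv]
    ext v
    simp only [map_sub, ContinuousLinearMap.comp_id, smul_apply, sub_apply, coe_innerSL_apply,
      nsmul_eq_mul, Nat.cast_ofNat, smul_eq_mul]
    ring
  have hB : HasFDerivAt (fderiv ℝ (fun y => a * ‖y - x₀‖ ^ 2 + c))
      ((2 * a) • (innerSL ℝ : E →L[ℝ] E →L[ℝ] ℝ)) x := by
    rw [hfd]
    exact ((innerSL ℝ).hasFDerivAt.comp x (hasFDerivAt_sub_const (x := x) x₀)).const_smul (2 * a)
  rw [lap_eq_sum_of_hasFDerivAt hB]
  have (i : Fin N) : ((2 * a) • (innerSL ℝ : E →L[ℝ] E →L[ℝ] ℝ)) (EuclideanSpace.single i 1)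
      (EuclideanSpace.single i 1) = 2 * a := by
    rw [smul_apply, smul_apply, innerSL_apply_apply]
    simp
  simp only [this, Finset.sum_const, Finset.card_univ, Fintype.card_fin, nsmul_eq_mul]
  ring

lemma fderiv_fderiv_apply_eq_deriv_deriv_line {G : E → ℝ} (hG : ContDiff ℝ 2 G) (x e : E) :
    fderiv ℝ (fderiv ℝ G) x e e = deriv (deriv fun s : ℝ => G (x + s • e)) 0 := by
  have hline (s : ℝ) : HasDerivAt (fun s : ℝ => x + s • e) e s := by
    simpa using ((hasDerivAt_id s).smul_const e).const_add x
  have hderiv : deriv (fun s : ℝ => G (x + s • e)) = fun s => fderiv ℝ G (x + s • e) e := by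
    funext s
    exact ((hG.differentiable two_ne_zero _).hasFDerivAt.comp_hasDerivAt s (hline s)).deriv
  have hG' : DifferentiableAt ℝ (fderiv ℝ G) x :=
    (hG.fderiv_right (m := 1) le_rfl).differentiable one_ne_zero x
  have h1 : HasDerivAt (fun s : ℝ => fderiv ℝ G (x + s • e)) (fderiv ℝ (fderiv ℝ G) x e) 0 :=
    hG'.hasFDerivAt.comp_hasDerivAt_of_eq 0 (hline 0) (by simp)
  have h2 :
      HasDerivAt (fun s : ℝ => fderiv ℝ G (x + s • e) e) (fderiv ℝ (fderiv ℝ G) x e e) 0 := by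
    simpa using h1.clm_apply (hasDerivAt_const 0 e)
  rw [hderiv, h2.deriv]

lemma lap_nonpos_of_isLocalMax {G : E → ℝ} (hG : ContDiff ℝ 2 G) {x : E} (hx : IsLocalMax G x) :
    lap G x ≤ 0 := by
  refine Finset.sum_nonpos fun i _ => ?_
  set e : E := EuclideanSpace.single i 1
  rw [iteratedFDeriv_two_apply]
  simp only [Matrix.cons_val_zero, Matrix.cons_val_one]
  rw [fderiv_fderiv_apply_eq_deriv_deriv_line hG x e]
  have hcont : Continuous fun s : ℝ => x + s • e := by fun_prop
  refine IsLocalMax.deriv_deriv_nonpos ?_ (hG.continuous.comp hcont).continuousAt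
  exact IsLocalMax.comp_continuous (by simpa using hx) hcont.continuousAt

noncomputable def penalty (δ K T₀ : ℝ) (x : E) (s : ℝ) (y : E) : ℝ :=
  δ * ‖y - x‖ ^ 2 + δ * (1 + K * (s - T₀))

lemma le_penalty {δ K T₀ s : ℝ} (hδ : 0 ≤ δ) (hK : 0 ≤ K) (hs : T₀ ≤ s) (x y : E) :
    δ * ‖y - x‖ ^ 2 + δ ≤ penalty δ K T₀ x s y := by
  have : 0 ≤ δ * (K * (s - T₀)) := by have := sub_nonneg.2 hs; positivity
  simp only [penalty]
  linarith

lemma exists_isMaxOn_sub_penalty {K T₀ T₁ M : ℝ} (hK : 0 ≤ K) {d : ℝ → E → ℝ}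
    (hcont : ContinuousOn (fun p : ℝ × E => d p.1 p.2) (Icc T₀ T₁ ×ˢ univ))
    (hbdd : ∀ t ∈ Icc T₀ T₁, ∀ x, d t x ≤ M) (hinit : ∀ x, d T₀ x ≤ 0) {t : ℝ} {x : E}
    (ht : t ∈ Icc T₀ T₁) (hpos : 0 < d t x) :
    ∃ δ > 0, ∃ ts ∈ Ioc T₀ T₁, ∃ xs, 0 < d ts xs ∧
      IsMaxOn (fun p : ℝ × E => d p.1 p.2 - penalty δ K T₀ x p.1 p.2) (Icc T₀ T₁ ×ˢ univ)
        (ts, xs) := by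
  have hT : 0 ≤ T₁ - T₀ := by linarith [ht.1, ht.2]
  set δ : ℝ := d t x / (2 * (1 + K * (T₁ - T₀)))
  have hδ : 0 < δ := by positivity
  set g : ℝ × E → ℝ := fun p => d p.1 p.2 - penalty δ K T₀ x p.1 p.2
  set R : ℝ := √(|M| / δ)
  have hgt : 0 < g (t, x) := by
    have hhalf : δ * (1 + K * (T₁ - T₀)) = d t x / 2 := by
      simp only [δ]
      field_simp
    have : δ * (1 + K * (t - T₀)) ≤ δ * (1 + K * (T₁ - T₀)) := by gcongr; exact ht.2
    simp only [g, penalty, sub_self, norm_zero]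
    linarith
  -- beyond radius `R` the penalty exceeds the bound `M`
  have hout : ∀ p ∈ Icc T₀ T₁ ×ˢ univ \ Icc T₀ T₁ ×ˢ closedBall x R, g p < 0 := by
    rintro ⟨s, y⟩ ⟨⟨hs, -⟩, hsy⟩
    have hR : R < ‖y - x‖ := by simpa [hs, dist_eq_norm] using hsy
    have hRsq : δ * R ^ 2 = |M| := by
      rw [Real.sq_sqrt (by positivity)]
      field_simp
    have : δ * R ^ 2 < δ * ‖y - x‖ ^ 2 := by gcongr
    have := le_penalty hδ.le hK hs.1 x y
    have := hbdd s hs y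
    simp only [g]
    linarith [le_abs_self M]
  have hgcont : ContinuousOn g (Icc T₀ T₁ ×ˢ closedBall x R) :=
    (hcont.mono (prod_mono subset_rfl (subset_univ _))).sub
      (Continuous.continuousOn (by unfold penalty; fun_prop))
  obtain ⟨⟨ts, xs⟩, ⟨hts, -⟩, hmax⟩ :=
    (isCompact_Icc.prod (isCompact_closedBall x R)).exists_isMaxOn_of_lt_off hgcont (p := (t, x))
      ⟨ht, mem_closedBall_self (by positivity)⟩ fun p hp => (hout p hp).trans hgt
  have hgs : 0 < d ts xs - penalty δ K T₀ x ts xs := hgt.trans_le (hmax ⟨ht, mem_univ x⟩)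
  have hpen := le_penalty hδ.le hK hts.1 x xs
  refine ⟨δ, hδ, ts, ⟨hts.1.lt_of_ne fun h => ?_, hts.2⟩, xs, ?_, hmax⟩
  · rw [← show T₀ = ts from h] at hgs hpen
    nlinarith [hinit xs, sq_nonneg ‖xs - x‖]
  · nlinarith [sq_nonneg ‖xs - x‖]

theorem nonpos_of_heat_subsolution {a T₀ T₁ M : ℝ} (ha : 0 ≤ a) {d : ℝ → E → ℝ}
    (hcont : ContinuousOn (fun p : ℝ × E => d p.1 p.2) (Icc T₀ T₁ ×ˢ univ))
    (hbdd : ∀ t ∈ Icc T₀ T₁, ∀ x, d t x ≤ M) (hinit : ∀ x, d T₀ x ≤ 0)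
    (hdiff : ∀ t ∈ Ioc T₀ T₁, ∀ x, DifferentiableAt ℝ (fun s => d s x) t)
    (hsmooth : ∀ t ∈ Ioc T₀ T₁, ContDiff ℝ 2 (d t))
    (hsub : ∀ t ∈ Ioc T₀ T₁, ∀ x, 0 < d t x → deriv (fun s => d s x) t ≤ a * lap (d t) x) :
    ∀ t ∈ Icc T₀ T₁, ∀ x, d t x ≤ 0 := by
  intro t ht x
  by_contra! hpos
  -- the penalty grows in time at rate `δ K`, while `a Δ` of it is only `2 N a δ`
  set K : ℝ := 2 * N * a + 1
  obtain ⟨δ, hδ, ts, hts, xs, hdpos, hmax⟩ :=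
    exists_isMaxOn_sub_penalty (K := K) (by positivity) hcont hbdd hinit ht hpos
  have htime : δ * K ≤ deriv (fun s => d s xs) ts := by
    have hpen : HasDerivAt (fun s => penalty δ K T₀ x s xs) (δ * K) ts := by
      simpa [penalty] using ((((hasDerivAt_id ts).sub_const T₀).const_mul K).const_add 1
        |>.const_mul δ).const_add (δ * ‖xs - x‖ ^ 2)
    have := deriv_nonneg_of_isMaxOn_Icc_right hts.1 ((hdiff ts hts xs).hasDerivAt.sub hpen)
      fun s hs => hmax (show (s, xs) ∈ Icc T₀ T₁ ×ˢ univ from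
        ⟨⟨hs.1, hs.2.trans hts.2⟩, mem_univ xs⟩)
    linarith
  have hspace : lap (d ts) xs ≤ 2 * N * δ := by
    have hpen : ContDiff ℝ 2 (penalty δ K T₀ x ts) :=
      (contDiff_const.mul ((contDiff_norm_sq ℝ).comp (contDiff_id.sub contDiff_const))).add
        contDiff_const
    have hloc : IsLocalMax (fun y => d ts y - penalty δ K T₀ x ts y) xs :=
      Filter.Eventually.of_forall fun y => hmax (show (ts, y) ∈ Icc T₀ T₁ ×ˢ univ from
        ⟨Ioc_subset_Icc_self hts, mem_univ y⟩)
    have := lap_nonpos_of_isLocalMax ((hsmooth ts hts).sub hpen) hloc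
    rw [lap_sub (hsmooth ts hts).contDiffAt hpen.contDiffAt,
      show lap (penalty δ K T₀ x ts) xs = 2 * N * δ from lap_mul_norm_sub_sq_add δ x _ xs] at this
    linarith
  have := hsub ts hts xs hdpos
  nlinarith [mul_le_mul_of_nonneg_left hspace ha]

noncomputable def planarWave (U : ℝ → ℝ) (c ε h : ℝ) (x₀ n : E) (t : ℝ) (x : E) : ℝ :=
  U ((⟪x - x₀, n⟫ - c * t) / ε + h)

section PlanarWave

variable {U : ℝ → ℝ} {c ε h : ℝ} {x₀ n : EuclideanSpace ℝ (Fin N)}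

lemma planarWave_arg_eq (t : ℝ) (y : E) :
    (⟪y - x₀, n⟫ - c * t) / ε + h = ⟪y, ε⁻¹ • n⟫ + (h - (⟪x₀, n⟫ + c * t) / ε) := by
  simp only [real_inner_smul_right, inner_sub_left]
  ring

lemma planarWave_eq_comp_inner_add (t : ℝ) :
    planarWave U c ε h x₀ n t = fun y => U (⟪y, ε⁻¹ • n⟫ + (h - (⟪x₀, n⟫ + c * t) / ε)) := by
  funext y
  rw [planarWave, planarWave_arg_eq]

lemma planarWave_sub_delay (τ t : ℝ) (hε : ε ≠ 0) (x : E) :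
    planarWave U c ε h x₀ n (t - ε * τ) x = U ((⟪x - x₀, n⟫ - c * t) / ε + h + c * τ) := by
  simp only [planarWave]
  congr 1
  field_simp
  ring

lemma hasDerivAt_planarWave_time (hU : Differentiable ℝ U) (t : ℝ) (x : E) :
    HasDerivAt (fun s => planarWave U c ε h x₀ n s x)
      (-(c / ε) * deriv U ((⟪x - x₀, n⟫ - c * t) / ε + h)) t := by
  have harg : HasDerivAt (fun s => (⟪x - x₀, n⟫ - c * s) / ε + h) (-(c / ε)) t := by
    simpa [neg_div] using (((hasDerivAt_id t).const_mul c).const_sub ⟪x - x₀, n⟫).div_const ε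
      |>.add_const h
  simpa [planarWave, Function.comp_def, mul_comm] using (hU _).hasDerivAt.comp t harg

lemma lap_planarWave (hU : ContDiff ℝ 2 U) (hn : ‖n‖ = 1) (t : ℝ) (x : E) :
    lap (planarWave U c ε h x₀ n t) x
      = deriv (deriv U) ((⟪x - x₀, n⟫ - c * t) / ε + h) / ε ^ 2 := by
  rw [planarWave_eq_comp_inner_add, lap_comp_inner_add hU, norm_smul, hn, ← planarWave_arg_eq]
  simp [div_eq_mul_inv]

lemma continuous_planarWave (hU : Continuous U) :
    Continuous fun p : ℝ × EuclideanSpace ℝ (Fin N) => planarWave U c ε h x₀ n p.1 p.2 := by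
  unfold planarWave
  fun_prop

lemma contDiff_planarWave (hU : ContDiff ℝ 2 U) (t : ℝ) :
    ContDiff ℝ 2 (planarWave U c ε h x₀ n t) := by
  rw [planarWave_eq_comp_inner_add]
  exact hU.comp ((contDiff_id.inner ℝ contDiff_const).add contDiff_const)

lemma planarWave_ge_of_inner_nonpos (hU : Antitone U) (hc : 0 ≤ c) (hε : 0 < ε) {τ t : ℝ}
    (ht : -(ε * τ) ≤ t) {x : E} (hx : ⟪x - x₀, n⟫ ≤ 0) :
    U (c * τ + h) ≤ planarWave U c ε h x₀ n t x := by
  refine hU ?_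
  have : (⟪x - x₀, n⟫ - c * t) / ε ≤ c * τ := by
    rw [div_le_iff₀ hε]
    nlinarith
  linarith

theorem MonoWave.hasDerivAt_planarWave {f : ℝ → ℝ} {τ : ℝ} (hU : MonoWave f τ U c)
    (hn : ‖n‖ = 1) (hε : ε ≠ 0) (t : ℝ) (x : E) :
    HasDerivAt (fun s => planarWave U c ε h x₀ n s x)
      (ε * lap (planarWave U c ε h x₀ n t) x + (1 / ε) *
        (f (planarWave U c ε h x₀ n (t - ε * τ) x) - planarWave U c ε h x₀ n t x)) t := by
  obtain ⟨hC2, -, hwave, -, -⟩ := hU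
  convert hasDerivAt_planarWave_time (hC2.differentiable two_ne_zero) t x using 1
  rw [lap_planarWave hC2 hn, planarWave_sub_delay τ t hε]
  have := hwave ((⟪x - x₀, n⟫ - c * t) / ε + h)
  simp only [planarWave]
  generalize (⟪x - x₀, n⟫ - c * t) / ε + h = ξ at this ⊢
  field_simp
  linear_combination this

end PlanarWave

theorem IsRDSol.le_of_supersolution {f : ℝ → ℝ} {τ ε : ℝ} (hτ : 0 < τ) (hε : 0 < ε)
    (hf : MonotoneOn f (Icc 0 1)) {φ u w : ℝ → E → ℝ} (hu : IsRDSol f τ ε φ u)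
    (hw_cont : Continuous fun p : ℝ × E => w p.1 p.2) (hw_range : ∀ t x, w t x ∈ Icc (0:ℝ) 1)
    (hw_diff : ∀ t > (0:ℝ), ∀ x, DifferentiableAt ℝ (fun s => w s x) t)
    (hw_smooth : ∀ t > (0:ℝ), ContDiff ℝ 2 (w t))
    (hw_super : ∀ t > (0:ℝ), ∀ x,
      ε * lap (w t) x + (1 / ε) * (f (w (t - ε * τ) x) - w t x) ≤ deriv (fun s => w s x) t)
    (hinit : ∀ t ∈ Icc (-(ε * τ)) 0, ∀ x, u t x ≤ w t x) :
    ∀ t ≥ -(ε * τ), ∀ x, u t x ≤ w t x := by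
  obtain ⟨hu_cont, hu_range, -, hu_reg, hu_eq⟩ := hu
  have hετ : 0 < ε * τ := mul_pos hε hτ
  refine forall_ge_of_forall_Icc_step hετ hinit fun T hT ih => ?_
  have hpos : ∀ t ∈ Ioc T (T + ε * τ), 0 < t := fun t ht => hT.trans_lt ht.1
  -- the delayed values lie in earlier layers, where they are already ordered
  have hsub : ∀ t ∈ Ioc T (T + ε * τ), ∀ x, 0 < u t x - w t x →
      deriv (fun s => u s x - w s x) t ≤ ε * lap (fun y => u t y - w t y) x := by
    intro t ht x hd
    have ht0 := hpos t ht
    obtain ⟨hu_diff, hu_smooth⟩ := hu_reg t ht0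
    have hdel : f (u (t - ε * τ) x) ≤ f (w (t - ε * τ) x) :=
      hf (hu_range _ (by linarith) x) (hw_range _ x)
        (ih (t - ε * τ) ⟨by linarith, by linarith [ht.2]⟩ x)
    have hreact : (1 / ε) * (f (u (t - ε * τ) x) - f (w (t - ε * τ) x) - (u t x - w t x)) ≤ 0 :=
      mul_nonpos_of_nonneg_of_nonpos (by positivity) (by linarith)
    rw [deriv_fun_sub (hu_diff x) (hw_diff t ht0 x), hu_eq t ht0 x,
      lap_sub hu_smooth.contDiffAt (hw_smooth t ht0).contDiffAt]
    linarith [hw_super t ht0 x]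
  have hcont : ContinuousOn (fun p : ℝ × E => u p.1 p.2 - w p.1 p.2) (Icc T (T + ε * τ) ×ˢ univ) :=
    (hu_cont.mono (prod_mono (fun s hs => show -(ε * τ) ≤ s by linarith [hs.1]) subset_rfl)).sub
      hw_cont.continuousOn
  have hle := nonpos_of_heat_subsolution (d := fun s y => u s y - w s y) (M := 1) hε.le hcont
    (fun t ht x => by linarith [(hu_range t (by linarith [ht.1]) x).2, (hw_range t x).1])
    (fun x => sub_nonpos.2 (ih T ⟨by linarith, le_rfl⟩ x))
    (fun t ht x => ((hu_reg t (hpos t ht)).1 x).sub (hw_diff t (hpos t ht) x))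
    (fun t ht => (hu_reg t (hpos t ht)).2.sub (hw_smooth t (hpos t ht))) hsub
  exact fun t ht x => sub_nonpos.1 (hle t ht x)

end

theorem stmt_17_general {N : ℕ} (τ : ℝ) (hτ : 0 < τ)
    (f : ℝ → ℝ) (hf : Monostable f)
    (Ω₀ : Set (EuclideanSpace ℝ (Fin N)))
    (v0 : EuclideanSpace ℝ (Fin N) → ℝ)
    (hv0supp : closure (Function.support v0) = closure Ω₀)
    (φ : ℝ → EuclideanSpace ℝ (Fin N) → ℝ)
    (hφv0 : ∀ θ ∈ Icc (-τ) 0, ∀ x, φ θ x ≤ v0 x)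
    (Ustar : ℝ → ℝ) (cstar : ℝ) (hcstar : 0 < cstar)
    (hwave : MonoWave f τ Ustar cstar) (hmono : Antitone Ustar)
    (h : ℝ) (hh : ∀ x, v0 x ≤ Ustar (cstar * τ + h)) :
    ∀ ε > (0:ℝ), ∀ u, IsRDSol f τ ε φ u →
      ∀ x₀ ∈ frontier Ω₀, ∀ n : EuclideanSpace ℝ (Fin N), ‖n‖ = 1 →
      (∀ y ∈ Ω₀, ⟪y - x₀, n⟫ ≤ (0:ℝ)) →
      ∀ t ≥ -(ε * τ), ∀ x,
        u t x ≤ Ustar ((⟪x - x₀, n⟫ - cstar * t) / ε + h) := by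
  intro ε hε u hu x₀ _ n hn hplane
  have hcl : closure Ω₀ ⊆ {y | ⟪y - x₀, n⟫ ≤ (0:ℝ)} :=
    closure_minimal hplane (isClosed_le (by fun_prop) continuous_const)
  have hsol := hwave.hasDerivAt_planarWave (h := h) (x₀ := x₀) hn hε.ne'
  obtain ⟨hU, hUrange, -⟩ := hwave
  refine hu.le_of_supersolution hτ hε hf.monotoneOn (continuous_planarWave hU.continuous)
    (fun t x => hUrange _) (fun t _ x => (hsol t x).differentiableAt)
    (fun t _ => contDiff_planarWave hU t) (fun t _ x => (hsol t x).deriv.ge) ?_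
  intro t ht x
  have hu0 : u t x ≤ v0 x := by
    rw [hu.2.2.1 t ht x]
    refine hφv0 _ ⟨?_, div_nonpos_of_nonpos_of_nonneg ht.2 hε.le⟩ x
    rw [le_div_iff₀ hε]
    linarith [ht.1]
  by_cases hx : x ∈ closure Ω₀
  · exact hu0.trans ((hh x).trans
      (planarWave_ge_of_inner_nonpos hmono hcstar.le hε ht.1 (hcl hx)))
  · have hv0x : v0 x = 0 :=
      Function.notMem_support.1 fun hx' => hx (hv0supp ▸ subset_closure hx')
    exact hu0.trans (hv0x ▸ (hUrange _).1)

/-- Global-in-time upper barriers: planar translates of the minimal-speed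
monostable travelling wave dominate the solution of the scaled delayed
reaction–diffusion equation. -/
theorem stmt_17 {N : ℕ} (hN : 1 ≤ N) (τ : ℝ) (hτ : 0 < τ)
    (f : ℝ → ℝ) (hf : Monostable f)
    (Ω₀ : Set (EuclideanSpace ℝ (Fin N))) (hΩne : Ω₀.Nonempty)
    (hΩbdd : Bornology.IsBounded Ω₀) (hΩconv : Convex ℝ Ω₀) (hΩopen : IsOpen Ω₀)
    (v0 : EuclideanSpace ℝ (Fin N) → ℝ) (hv0uc : UniformContinuous v0)
    (hv0r : ∀ x, v0 x ∈ Ico (0:ℝ) 1)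
    (hv0supp : closure (Function.support v0) = closure Ω₀)
    (φ : ℝ → EuclideanSpace ℝ (Fin N) → ℝ)
    (hφuc : UniformContinuousOn (fun p : ℝ × EuclideanSpace ℝ (Fin N) => φ p.1 p.2)
      (Icc (-τ) 0 ×ˢ univ))
    (hφr : ∀ θ ∈ Icc (-τ) 0, ∀ x, φ θ x ∈ Icc (0:ℝ) 1)
    (hφv0 : ∀ θ ∈ Icc (-τ) 0, ∀ x, φ θ x ≤ v0 x)
    (Ustar : ℝ → ℝ) (cstar : ℝ) (hcstar : 0 < cstar)
    (hwave : MonoWave f τ Ustar cstar) (hmono : Antitone Ustar)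
    (hmin : ∀ c U, MonoWave f τ U c → cstar ≤ c)
    (h : ℝ) (hh : ∀ x, v0 x ≤ Ustar (cstar * τ + h)) :
    ∀ ε > (0:ℝ), ∀ u, IsRDSol f τ ε φ u →
      ∀ x₀ ∈ frontier Ω₀, ∀ n : EuclideanSpace ℝ (Fin N), ‖n‖ = 1 →
      (∀ y ∈ Ω₀, ⟪y - x₀, n⟫ ≤ (0:ℝ)) →
      ∀ t ≥ -(ε * τ), ∀ x,
        u t x ≤ Ustar ((⟪x - x₀, n⟫ - cstar * t) / ε + h) :=
  stmt_17_general τ hτ f hf Ω₀ v0 hv0supp φ hφv0 Ustar cstar hcstar hwave hmono h hh
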